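/- arXiv:2408.13216 — 8 statements merged into one kernel-verified Lean document; each statement's English description precedes it below -/
import Mathlib

section
/- Let R be a commutative ring with identity and I a nonzero proper ideal of R. If x is a vertex of QΓ''_I(R) and 0 ≠ i ∈ I, then x + i is also a vertex of QΓ''_I(R), x + i ≠ x whenever i ≠ 0 is not a zero of addition (i.e., x + i ≠ x since i ≠ 0), and x is not adjacent to x + i. In particular, QΓ''_I(R) is not a complete graph whenever its vertex set is nonempty. -/
lemma span_add_sup_eq {R : Type*} [CommRing R] (I : Ideal R) (x i : R) (hi : i ∈ I) :
    Ideal.span {x + i} ⊔ I = Ideal.span {x} ⊔ I := by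
  apply le_antisymm
  · apply sup_le _ le_sup_right
    rw [Ideal.span_le, Set.singleton_subset_iff]
    exact Ideal.add_mem _ (Ideal.mem_sup_left (Ideal.subset_span rfl))
      (Ideal.mem_sup_right hi)
  · apply sup_le _ le_sup_right
    rw [Ideal.span_le, Set.singleton_subset_iff]
    have hm : x + i ∈ Ideal.span {x + i} ⊔ I := Ideal.mem_sup_left (Ideal.subset_span rfl)
    simpa using Ideal.sub_mem _ hm (Ideal.mem_sup_right hi)

theorem stmt_4 {R : Type*} [CommRing R] (I : Ideal R) (hI0 : I ≠ ⊥) (hI1 : I ≠ ⊤) :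
    (∀ x : R, (x ∉ I.radical ∧ Ideal.span {x} ⊔ I ≠ ⊤ ∧
        Ideal.span {x} ⊔ I.radical = Ideal.span {x} ⊔ I) →
      ∀ i ∈ I, i ≠ 0 →
        ((x + i ∉ I.radical ∧ Ideal.span {x + i} ⊔ I ≠ ⊤ ∧
            Ideal.span {x + i} ⊔ I.radical = Ideal.span {x + i} ⊔ I) ∧
          x + i ≠ x ∧
          ¬(x ∉ Ideal.span {x + i} ⊔ I ∧ x + i ∉ Ideal.span {x} ⊔ I))) ∧
    ({x : R | x ∉ I.radical ∧ Ideal.span {x} ⊔ I ≠ ⊤ ∧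
        Ideal.span {x} ⊔ I.radical = Ideal.span {x} ⊔ I}.Nonempty →
      ¬(∀ x y : R,
          (x ∉ I.radical ∧ Ideal.span {x} ⊔ I ≠ ⊤ ∧
            Ideal.span {x} ⊔ I.radical = Ideal.span {x} ⊔ I) →
          (y ∉ I.radical ∧ Ideal.span {y} ⊔ I ≠ ⊤ ∧
            Ideal.span {y} ⊔ I.radical = Ideal.span {y} ⊔ I) →
          x ≠ y → (x ∉ Ideal.span {y} ⊔ I ∧ y ∉ Ideal.span {x} ⊔ I))) := by
  have main : ∀ x : R, (x ∉ I.radical ∧ Ideal.span {x} ⊔ I ≠ ⊤ ∧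
        Ideal.span {x} ⊔ I.radical = Ideal.span {x} ⊔ I) →
      ∀ i ∈ I, i ≠ 0 →
        ((x + i ∉ I.radical ∧ Ideal.span {x + i} ⊔ I ≠ ⊤ ∧
            Ideal.span {x + i} ⊔ I.radical = Ideal.span {x + i} ⊔ I) ∧
          x + i ≠ x ∧
          ¬(x ∉ Ideal.span {x + i} ⊔ I ∧ x + i ∉ Ideal.span {x} ⊔ I)) := by
    rintro x ⟨hrad, htop, heq⟩ i hi hi0
    have hs := span_add_sup_eq I x i hi
    have hsr : Ideal.span {x + i} ⊔ I.radical = Ideal.span {x} ⊔ I.radical :=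
      span_add_sup_eq I.radical x i (Ideal.le_radical hi)
    refine ⟨⟨?_, ?_, ?_⟩, ?_, ?_⟩
    · intro h
      exact hrad (by simpa using I.radical.sub_mem h (Ideal.le_radical hi))
    · rw [hs]; exact htop
    · rw [hs, hsr, heq]
    · intro h
      exact hi0 (by linear_combination h)
    · rintro ⟨hx, -⟩
      rw [hs] at hx
      exact hx (Ideal.mem_sup_left (Ideal.subset_span rfl))
  refine ⟨main, ?_⟩
  rintro ⟨x, hx⟩ hcomp
  obtain ⟨i, hi, hi0⟩ : ∃ i ∈ I, i ≠ 0 := by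
    by_contra h
    push_neg at h
    exact hI0 (by ext a; simp [Ideal.mem_bot]; exact ⟨h a, by rintro rfl; exact I.zero_mem⟩)
  obtain ⟨hv, hne, hnadj⟩ := main x hx i hi hi0
  exact hnadj (hcomp x (x + i) hx hv hne.symm)
end

section
/- Let n = p^a · q^b where p and q are distinct primes and a, b ≥ 1, and let I = p^{a₁} q^{b₁} ℤ_n with 1 ≤ a₁ ≤ a and 1 ≤ b₁ ≤ b. Then Γ''_{√I}(ℤ_n) is a complete bipartite graph, with parts V₁ = pℤ_n \ pqℤ_n and V₂ = qℤ_n \ pqℤ_n: vertices within each part are never adjacent, and every vertex of V₁ is adjacent to every vertex of V₂. -/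
private lemma mem_span_iff (n m : ℕ) [NeZero n] (hm : m ∣ n) (x : ZMod n) :
    x ∈ Ideal.span {(m : ZMod n)} ↔ m ∣ x.val := by
  rw [Ideal.mem_span_singleton]
  constructor
  · rintro ⟨c, hc⟩
    have h1 : ((x.val : ℕ) : ZMod m) = 0 := by
      have := congrArg (ZMod.castHom hm (ZMod m)) hc
      rw [map_mul, map_natCast, ZMod.natCast_self, zero_mul, ZMod.castHom_apply] at this
      rw [ZMod.natCast_val]; exact this
    exact (ZMod.natCast_eq_zero_iff _ _).mp h1
  · rintro ⟨k, hk⟩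
    exact ⟨(k : ZMod n), by rw [← Nat.cast_mul, ← hk, ZMod.natCast_zmod_val]⟩

private lemma bez (c d : ℕ) (h : Nat.Coprime c d) :
    ∃ u v : ℤ, (c : ℤ) * u + (d : ℤ) * v = 1 := by
  obtain ⟨u, v, huv⟩ := h.isCoprime
  exact ⟨u, v, by linarith⟩

private lemma span_ne_top (n d : ℕ) [NeZero n] (hn1 : 1 < n) (hd : d ∣ n) (hd1 : d ≠ 1) :
    Ideal.span {(d : ZMod n)} ≠ ⊤ := by
  haveI : Fact (1 < n) := ⟨hn1⟩
  rw [Ne, Ideal.eq_top_iff_one, mem_span_iff n d hd, ZMod.val_one]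
  exact fun h => hd1 (Nat.dvd_one.mp h)

private lemma sup_eq_top (n p q : ℕ) [NeZero n] (hp : p.Prime) (hq : q.Prime) (x : ZMod n)
    (h1 : ¬ p ∣ x.val) (h2 : ¬ q ∣ x.val) :
    Ideal.span {x} ⊔ Ideal.span {((p * q : ℕ) : ZMod n)} = ⊤ := by
  have hcop : Nat.Coprime x.val (p * q) :=
    Nat.Coprime.mul_right ((hp.coprime_iff_not_dvd.mpr h1).symm)
      ((hq.coprime_iff_not_dvd.mpr h2).symm)
  obtain ⟨u, v, huv⟩ := bez _ _ hcop
  rw [Ideal.eq_top_iff_one]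
  have hc : (1 : ZMod n) = x * (u : ZMod n) + ((p * q : ℕ) : ZMod n) * (v : ZMod n) := by
    push_cast
    have := congrArg (Int.cast : ℤ → ZMod n) huv
    push_cast at this
    rw [ZMod.natCast_zmod_val] at this
    linear_combination -this
  rw [hc]
  exact Ideal.add_mem _
    (Ideal.mem_sup_left (Ideal.mul_mem_right _ _ (Ideal.mem_span_singleton_self x)))
    (Ideal.mem_sup_right (Ideal.mul_mem_right _ _ (Ideal.mem_span_singleton_self _)))

private lemma mem_sup_of (n c q b : ℕ) [NeZero n] (hq : q.Prime) (hb : 1 ≤ b) (x : ZMod n)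
    (hx : c ∣ x.val) (hx2 : ¬ (c * q) ∣ x.val) :
    ((c : ℕ) : ZMod n) ∈ Ideal.span {x} ⊔ Ideal.span {((c * q : ℕ) : ZMod n)} := by
  obtain ⟨w, hw⟩ := hx
  have hqw : ¬ q ∣ w := fun ⟨t, ht⟩ => hx2 ⟨t, by rw [hw, ht]; ring⟩
  have hcop : Nat.Coprime w (q ^ b) :=
    ((hq.coprime_iff_not_dvd.mpr hqw).symm).pow_right b
  obtain ⟨b', rfl⟩ := Nat.exists_eq_add_of_le hb
  rw [pow_add, pow_one] at hcop
  obtain ⟨u, v, huv⟩ := bez _ _ hcop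
  have hz : (c : ℤ) = (x.val : ℤ) * u + ((c * q : ℕ) : ℤ) * ((q : ℤ) ^ b' * v) := by
    have hv : (x.val : ℤ) = (c : ℤ) * w := by exact_mod_cast congrArg (Nat.cast : ℕ → ℤ) hw
    rw [hv]
    push_cast
    push_cast at huv
    linear_combination (-(c : ℤ)) * huv
  have hc : ((c : ℕ) : ZMod n) =
      x * (u : ZMod n) + ((c * q : ℕ) : ZMod n) * (((q : ℤ) ^ b' * v : ℤ) : ZMod n) := by
    have := congrArg (Int.cast : ℤ → ZMod n) hz
    push_cast at this
    rw [ZMod.natCast_zmod_val] at this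
    push_cast
    exact this
  rw [hc]
  exact Ideal.add_mem _
    (Ideal.mem_sup_left (Ideal.mul_mem_right _ _ (Ideal.mem_span_singleton_self x)))
    (Ideal.mem_sup_right (Ideal.mul_mem_right _ _ (Ideal.mem_span_singleton_self _)))

theorem stmt_5 (p q a b a₁ b₁ : ℕ) (hp : p.Prime) (hq : q.Prime) (hpq : p ≠ q)
    (ha : 1 ≤ a) (hb : 1 ≤ b) (ha₁ : 1 ≤ a₁) (ha₁' : a₁ ≤ a) (hb₁ : 1 ≤ b₁) (hb₁' : b₁ ≤ b)
    (n : ℕ) (hn : n = p ^ a * q ^ b)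
    (I : Ideal (ZMod n)) (hI : I = Ideal.span {((p ^ a₁ * q ^ b₁ : ℕ) : ZMod n)})
    (V₁ V₂ : Set (ZMod n))
    (hV₁ : V₁ = {x : ZMod n | x ∈ Ideal.span {((p : ℕ) : ZMod n)}} \
      {x : ZMod n | x ∈ Ideal.span {((p * q : ℕ) : ZMod n)}})
    (hV₂ : V₂ = {x : ZMod n | x ∈ Ideal.span {((q : ℕ) : ZMod n)}} \
      {x : ZMod n | x ∈ Ideal.span {((p * q : ℕ) : ZMod n)}}) :
    ({x : ZMod n | x ∉ I.radical ∧ Ideal.span {x} ⊔ I.radical ≠ ⊤} = V₁ ∪ V₂) ∧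
    (∀ x ∈ V₁, ∀ y ∈ V₁, x ≠ y →
      ¬(x ∉ Ideal.span {y} ⊔ I.radical ∧ y ∉ Ideal.span {x} ⊔ I.radical)) ∧
    (∀ x ∈ V₂, ∀ y ∈ V₂, x ≠ y →
      ¬(x ∉ Ideal.span {y} ⊔ I.radical ∧ y ∉ Ideal.span {x} ⊔ I.radical)) ∧
    (∀ x ∈ V₁, ∀ y ∈ V₂,
      x ≠ y ∧ x ∉ Ideal.span {y} ⊔ I.radical ∧ y ∉ Ideal.span {x} ⊔ I.radical) := by
  haveI : NeZero n := ⟨by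
    rw [hn]; exact Nat.mul_ne_zero (pow_ne_zero _ hp.pos.ne') (pow_ne_zero _ hq.pos.ne')⟩
  have hn1 : 1 < n := by
    rw [hn]
    calc 1 < 2 * 1 := by norm_num
    _ ≤ p ^ a * q ^ b := Nat.mul_le_mul
        (le_trans hp.two_le (Nat.le_self_pow (by omega) p))
        (Nat.one_le_iff_ne_zero.mpr (pow_ne_zero b hq.pos.ne'))
  haveI : Fact (1 < n) := ⟨hn1⟩
  have hcop : Nat.Coprime p q := (Nat.coprime_primes hp hq).mpr hpq
  have hpn : p ∣ n := hn ▸ Dvd.dvd.mul_right (dvd_pow_self p (by omega)) _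
  have hqn : q ∣ n := hn ▸ Dvd.dvd.mul_left (dvd_pow_self q (by omega)) _
  have hpqn : p * q ∣ n := by
    rw [hn]
    exact Nat.mul_dvd_mul (dvd_pow_self p (by omega)) (dvd_pow_self q (by omega))
  have hmn : p ^ a₁ * q ^ b₁ ∣ n := by
    rw [hn]
    exact Nat.mul_dvd_mul (pow_dvd_pow p ha₁') (pow_dvd_pow q hb₁')
  -- a value divisible by p^k of x^k stuff
  have hpow_dvd : ∀ (r : ℕ), r.Prime → r ∣ n → ∀ (x : ZMod n) (k : ℕ), k ≠ 0 →
      r ∣ (x ^ k).val → r ∣ x.val := by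
    intro r hr hrn x k hk hd
    have hx : x ^ k = ((x.val ^ k : ℕ) : ZMod n) := by
      rw [Nat.cast_pow, ZMod.natCast_zmod_val]
    rw [hx, ZMod.val_natCast] at hd
    rw [Nat.dvd_mod_iff hrn] at hd
    exact hr.dvd_of_dvd_pow hd
  have hpq_dvd : ∀ t : ℕ, p ∣ t → q ∣ t → p * q ∣ t := fun t h1 h2 =>
    Nat.Coprime.mul_dvd_of_dvd_of_dvd hcop h1 h2
  -- radical computation
  have hrad : I.radical = Ideal.span {((p * q : ℕ) : ZMod n)} := by
    apply le_antisymm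
    · intro x hx
      obtain ⟨k, hk⟩ := Ideal.mem_radical_iff.mp hx
      rw [hI, mem_span_iff n _ hmn] at hk
      have hk0 : k ≠ 0 := by
        rintro rfl
        simp only [pow_zero] at hk
        rw [ZMod.val_one] at hk
        have := Nat.le_of_dvd one_pos hk
        have hp2 := hp.two_le
        have hq2 := hq.two_le
        have : 2 * 2 ≤ p ^ a₁ * q ^ b₁ := Nat.mul_le_mul
          (le_trans hp2 (Nat.le_self_pow (by omega) p))
          (le_trans hq2 (Nat.le_self_pow (by omega) q))
        omega
      have hpk : p ∣ (x ^ k).val :=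
        dvd_trans (dvd_trans (dvd_pow_self p (by omega)) (Dvd.intro _ rfl)) hk
      have hqk : q ∣ (x ^ k).val :=
        dvd_trans (dvd_trans (dvd_pow_self q (by omega)) (Dvd.intro_left _ rfl)) hk
      rw [mem_span_iff n _ hpqn]
      exact hpq_dvd _ (hpow_dvd p hp hpn x k hk0 hpk) (hpow_dvd q hq hqn x k hk0 hqk)
    · rw [Ideal.span_le, Set.singleton_subset_iff]
      refine Ideal.mem_radical_iff.mpr ⟨a₁ + b₁, ?_⟩
      rw [hI, mem_span_iff n _ hmn]
      have : ((p * q : ℕ) : ZMod n) ^ (a₁ + b₁) = (((p * q) ^ (a₁ + b₁) : ℕ) : ZMod n) := by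
        push_cast; ring
      rw [this, ZMod.val_natCast]
      refine Nat.dvd_mod_iff hmn |>.mpr ?_
      rw [mul_pow]
      exact Nat.mul_dvd_mul (pow_dvd_pow p (by omega)) (pow_dvd_pow q (by omega))
  -- membership characterizations
  have hV₁' : ∀ x : ZMod n, x ∈ V₁ ↔ p ∣ x.val ∧ ¬ p * q ∣ x.val := by
    intro x
    rw [hV₁]
    simp only [Set.mem_diff, Set.mem_setOf_eq, mem_span_iff n p hpn x,
      mem_span_iff n (p * q) hpqn x]
  have hV₂' : ∀ x : ZMod n, x ∈ V₂ ↔ q ∣ x.val ∧ ¬ p * q ∣ x.val := by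
    intro x
    rw [hV₂]
    simp only [Set.mem_diff, Set.mem_setOf_eq, mem_span_iff n q hqn x,
      mem_span_iff n (p * q) hpqn x]
  -- sup bounded by span p when p divides
  have hsup_le : ∀ (r : ℕ), r ∣ n → r ∣ p * q → ∀ x : ZMod n, r ∣ x.val →
      Ideal.span {x} ⊔ Ideal.span {((p * q : ℕ) : ZMod n)} ≤ Ideal.span {((r : ℕ) : ZMod n)} := by
    intro r hrn hrpq x hrx
    refine sup_le ?_ ?_
    · exact (Ideal.span_singleton_le_iff_mem _).mpr ((mem_span_iff n r hrn x).mpr hrx)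
    · refine (Ideal.span_singleton_le_iff_mem _).mpr ?_
      rw [mem_span_iff n r hrn, ZMod.val_natCast]
      exact (Nat.dvd_mod_iff hrn).mpr hrpq
  have hspan_p_ne : Ideal.span {((p : ℕ) : ZMod n)} ≠ ⊤ :=
    span_ne_top n p hn1 hpn hp.one_lt.ne'
  have hspan_q_ne : Ideal.span {((q : ℕ) : ZMod n)} ≠ ⊤ :=
    span_ne_top n q hn1 hqn hq.one_lt.ne'
  refine ⟨?_, ?_, ?_, ?_⟩
  · -- vertex set
    ext x
    simp only [Set.mem_setOf_eq, hrad, Set.mem_union, hV₁' x, hV₂' x,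
      mem_span_iff n (p * q) hpqn x]
    constructor
    · rintro ⟨h1, h2⟩
      by_cases hpx : p ∣ x.val
      · exact Or.inl ⟨hpx, h1⟩
      by_cases hqx : q ∣ x.val
      · exact Or.inr ⟨hqx, h1⟩
      exact absurd (sup_eq_top n p q hp hq x hpx hqx) h2
    · rintro (⟨h1, h2⟩ | ⟨h1, h2⟩)
      · exact ⟨h2, fun htop => hspan_p_ne (top_le_iff.mp
          (htop ▸ hsup_le p hpn (Dvd.intro q rfl) x h1))⟩
      · exact ⟨h2, fun htop => hspan_q_ne (top_le_iff.mp
          (htop ▸ hsup_le q hqn (Dvd.intro_left p rfl) x h1))⟩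
  · -- V₁ non-adjacency
    intro x hx y hy _ ⟨hx1, _⟩
    rw [hV₁' x] at hx; rw [hV₁' y] at hy
    apply hx1
    rw [hrad]
    have hpmem := mem_sup_of n p q b hq hb y hy.1 hy.2
    have : Ideal.span {((p : ℕ) : ZMod n)} ≤
        Ideal.span {y} ⊔ Ideal.span {((p * q : ℕ) : ZMod n)} :=
      (Ideal.span_singleton_le_iff_mem _).mpr hpmem
    exact this ((mem_span_iff n p hpn x).mpr hx.1)
  · -- V₂ non-adjacency
    intro x hx y hy _ ⟨hx1, _⟩
    rw [hV₂' x] at hx; rw [hV₂' y] at hy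
    apply hx1
    rw [hrad]
    have hy2 : ¬ q * p ∣ y.val := by rw [mul_comm]; exact hy.2
    have hpmem := mem_sup_of n q p a hp ha y hy.1 hy2
    rw [mul_comm q p] at hpmem
    have : Ideal.span {((q : ℕ) : ZMod n)} ≤
        Ideal.span {y} ⊔ Ideal.span {((p * q : ℕ) : ZMod n)} :=
      (Ideal.span_singleton_le_iff_mem _).mpr hpmem
    exact this ((mem_span_iff n q hqn x).mpr hx.1)
  · -- cross adjacency
    intro x hx y hy
    rw [hV₁' x] at hx; rw [hV₂' y] at hy
    have hqx : ¬ q ∣ x.val := fun h => hx.2 (hpq_dvd _ hx.1 h)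
    have hpy : ¬ p ∣ y.val := fun h => hy.2 (hpq_dvd _ h hy.1)
    refine ⟨?_, ?_, ?_⟩
    · rintro rfl; exact hpy hx.1
    · rw [hrad]
      intro hmem
      have hle := hsup_le q hqn (Dvd.intro_left p rfl) y hy.1
      exact hqx ((mem_span_iff n q hqn x).mp (hle hmem))
    · rw [hrad]
      intro hmem
      have hle := hsup_le p hpn (Dvd.intro q rfl) x hx.1
      exact hpy ((mem_span_iff n p hpn y).mp (hle hmem))
end

section
/- Let n = p₁^{a₁}···p_k^{a_k} with p_i distinct primes and k > 1. For i = 1,…,k set x_i = n / p_i^{a_i}. Then S = {x₁,…,x_k} is a dominating set for the graph Γ''_{nℤ}(ℤ) restricted to vertices not in √(nℤ): every vertex x ∈ ℤ with x ∉ √(nℤ) = p₁···p_k ℤ and xℤ + nℤ ≠ ℤ is adjacent to some x_j, i.e., x ∉ x_jℤ + nℤ and x_j ∉ xℤ + nℤ. -/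
theorem stmt_6 (k : ℕ) (hk : 1 < k) (p : Fin k → ℕ) (a : Fin k → ℕ)
    (hp : ∀ i, (p i).Prime) (hdist : Function.Injective p) (ha : ∀ i, 1 ≤ a i)
    (n : ℕ) (hn : n = ∏ i, p i ^ a i)
    (X : Fin k → ℕ) (hX : ∀ i, X i = n / p i ^ a i)
    (rad : ℕ) (hrad : rad = ∏ i, p i) :
    ∀ x : ℤ, x ∉ Ideal.span {(rad : ℤ)} → Ideal.span {x} ⊔ Ideal.span {(n : ℤ)} ≠ ⊤ →
      ∃ j : Fin k,
        x ∉ Ideal.span {((X j : ℕ) : ℤ)} ⊔ Ideal.span {(n : ℤ)} ∧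
        ((X j : ℕ) : ℤ) ∉ Ideal.span {x} ⊔ Ideal.span {(n : ℤ)} := by
  intro x hxrad hxn
  -- basic facts
  have hsup : ∀ u v : ℤ, Ideal.span {u} ⊔ Ideal.span {v} = Ideal.span {gcd u v} := by
    intro u v
    rw [span_gcd, Ideal.span_insert]
  have hnpos : 0 < n := by
    rw [hn]
    exact Finset.prod_pos fun i _ => pow_pos (hp i).pos (a i)
  -- gcd x n is not 1
  have hg1 : ¬ IsUnit (gcd x (n : ℤ)) := by
    intro h
    apply hxn
    rw [hsup, Ideal.span_singleton_eq_top]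
    exact h
  set g : ℕ := Int.gcd x n with hg
  have hgx : (g : ℤ) ∣ x := Int.gcd_dvd_left x n
  have hgn : g ∣ n := by
    have := Int.gcd_dvd_right (a := x) (b := (n : ℤ))
    exact_mod_cast this
  have hgne1 : g ≠ 1 := by
    intro h
    apply hg1
    rw [← Int.coe_gcd, ← hg, h]
    exact isUnit_one
  have hgne0 : g ≠ 0 := by
    intro h
    have := Int.gcd_eq_zero_iff.mp h
    have : (n : ℤ) = 0 := this.2
    omega
  -- find a prime q dividing g
  obtain ⟨q, hq, hqg⟩ := Nat.exists_prime_and_dvd hgne1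
  have hqn : q ∣ n := hqg.trans hgn
  -- q equals some p i
  have : ∃ i : Fin k, i ∈ Finset.univ ∧ q ∣ p i ^ a i := by
    rw [hn] at hqn
    exact hq.prime.exists_mem_finset_dvd hqn
  obtain ⟨i, -, hqpi⟩ := this
  have hqpi' : q = p i := by
    have := hq.dvd_of_dvd_pow hqpi
    exact (Nat.prime_dvd_prime_iff_eq hq (hp i)).mp this
  have hpix : (p i : ℤ) ∣ x := by
    refine dvd_trans ?_ hgx
    exact_mod_cast hqpi' ▸ hqg
  -- X i as a product
  have hpowdvd : p i ^ a i ∣ n := hn ▸ Finset.dvd_prod_of_mem _ (Finset.mem_univ i)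
  have hXi : X i = ∏ j ∈ Finset.univ.erase i, p j ^ a j := by
    rw [hX i, hn, ← Finset.mul_prod_erase _ _ (Finset.mem_univ i),
      Nat.mul_div_cancel_left _ (pow_pos (hp i).pos (a i))]
  have hpiXi : ¬ p i ∣ X i := by
    rw [hXi]
    intro h
    obtain ⟨j, hj, hdvd⟩ := (hp i).prime.exists_mem_finset_dvd h
    have : p i = p j := (Nat.prime_dvd_prime_iff_eq (hp i) (hp j)).mp
      ((hp i).dvd_of_dvd_pow hdvd)
    exact (Finset.mem_erase.mp hj).1 (hdist this).symm
  have hXidvdn : X i ∣ n := ⟨p i ^ a i, by rw [hX i, Nat.div_mul_cancel hpowdvd]⟩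
  -- find j with p j not dividing x
  have hexj : ∃ j : Fin k, ¬ (p j : ℤ) ∣ x := by
    by_contra h
    push_neg at h
    apply hxrad
    rw [Ideal.mem_span_singleton, hrad, Int.natCast_dvd]
    have : ∀ j : Fin k, p j ∣ x.natAbs := by
      intro j
      rw [← Int.natCast_dvd]
      exact h j
    have him : ∏ i : Fin k, p i = ∏ q ∈ Finset.univ.image p, q :=
      (Finset.prod_image (f := fun q => q) (g := p) (fun u _ v _ h => hdist h)).symm
    rw [him]
    refine Finset.prod_primes_dvd _ ?_ ?_
    · intro q hq
      simp only [Finset.mem_image] at hq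
      obtain ⟨j, -, rfl⟩ := hq
      exact (hp j).prime
    · intro q hq
      simp only [Finset.mem_image] at hq
      obtain ⟨j, -, rfl⟩ := hq
      exact this j
  obtain ⟨j, hpjx⟩ := hexj
  have hji : j ≠ i := fun h => hpjx (h ▸ hpix)
  have hpjXi : p j ∣ X i := by
    rw [hXi]
    exact dvd_trans (dvd_pow_self _ (Nat.one_le_iff_ne_zero.mp (ha j)))
      (Finset.dvd_prod_of_mem _ (Finset.mem_erase.mpr ⟨hji, Finset.mem_univ j⟩))
  refine ⟨i, ?_, ?_⟩
  · -- x ∉ span {X i} ⊔ span {n}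
    have : Ideal.span {((X i : ℕ) : ℤ)} ⊔ Ideal.span {(n : ℤ)} =
        Ideal.span {((X i : ℕ) : ℤ)} := by
      rw [sup_eq_left]
      exact Ideal.span_singleton_le_span_singleton.mpr (by exact_mod_cast hXidvdn)
    rw [this, Ideal.mem_span_singleton]
    intro h
    exact hpjx (dvd_trans (by exact_mod_cast hpjXi) h)
  · -- X i ∉ span {x} ⊔ span {n}
    rw [hsup, Ideal.mem_span_singleton]
    intro h
    rw [← Int.coe_gcd, ← hg] at h
    have : g ∣ X i := by exact_mod_cast h
    exact hpiXi (hqpi' ▸ hqg.trans this)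
end

section
/- Let R be a commutative ring with identity and I an ideal contained in more than one maximal ideal. Let J_I(R) be the intersection of all maximal ideals containing I. Then the graph Γ''_I(R) restricted to vertices not in J_I(R) is connected with diameter at most 2: for any two distinct vertices x, y in this restricted graph, either they are adjacent or there exists a vertex z ∉ J_I(R) adjacent to both. -/
theorem stmt_8 {R : Type*} [CommRing R] (I : Ideal R)
    (hmax : ∃ m₁ m₂ : Ideal R, m₁.IsMaximal ∧ m₂.IsMaximal ∧ I ≤ m₁ ∧ I ≤ m₂ ∧ m₁ ≠ m₂)
    (J : Ideal R) (hJ : J = sInf {m : Ideal R | m.IsMaximal ∧ I ≤ m}) :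
    ∀ x y : R,
      (x ∉ I ∧ Ideal.span {x} ⊔ I ≠ ⊤ ∧ x ∉ J) →
      (y ∉ I ∧ Ideal.span {y} ⊔ I ≠ ⊤ ∧ y ∉ J) →
      x ≠ y →
      (x ∉ Ideal.span {y} ⊔ I ∧ y ∉ Ideal.span {x} ⊔ I) ∨
      (∃ z : R, z ∉ I ∧ Ideal.span {z} ⊔ I ≠ ⊤ ∧ z ∉ J ∧ z ≠ x ∧ z ≠ y ∧
        (x ∉ Ideal.span {z} ⊔ I ∧ z ∉ Ideal.span {x} ⊔ I) ∧
        (z ∉ Ideal.span {y} ⊔ I ∧ y ∉ Ideal.span {z} ⊔ I)) := by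
  subst hJ
  intro x y hx hy hxy
  obtain ⟨hxI, hxtop, hxJ⟩ := hx
  obtain ⟨hyI, hytop, hyJ⟩ := hy
  obtain ⟨m₁, hm₁, hm₁le⟩ := Ideal.exists_le_maximal _ hxtop
  obtain ⟨n₁, hn₁, hn₁le⟩ := Ideal.exists_le_maximal _ hytop
  have hxm₁ : x ∈ m₁ := hm₁le (Ideal.mem_sup_left (Ideal.mem_span_singleton_self x))
  have hIm₁ : I ≤ m₁ := le_trans le_sup_right hm₁le
  have hyn₁ : y ∈ n₁ := hn₁le (Ideal.mem_sup_left (Ideal.mem_span_singleton_self y))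
  have hIn₁ : I ≤ n₁ := le_trans le_sup_right hn₁le
  have hx2 : ∃ m : Ideal R, (m.IsMaximal ∧ I ≤ m) ∧ x ∉ m := by
    by_contra h
    push_neg at h
    exact hxJ (Submodule.mem_sInf.mpr fun m hm => h m hm)
  have hy2 : ∃ m : Ideal R, (m.IsMaximal ∧ I ≤ m) ∧ y ∉ m := by
    by_contra h
    push_neg at h
    exact hyJ (Submodule.mem_sInf.mpr fun m hm => h m hm)
  obtain ⟨m₂, ⟨hm₂max, hIm₂⟩, hxm₂⟩ := hx2
  obtain ⟨n₂, ⟨hn₂max, hIn₂⟩, hyn₂⟩ := hy2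
  by_cases hcase : y ∈ m₂ ∧ x ∈ n₂
  · left
    constructor
    · intro hmem
      exact hxm₂ ((sup_le (Ideal.span_le.mpr (Set.singleton_subset_iff.mpr hcase.1)) hIm₂) hmem)
    · intro hmem
      exact hyn₂ ((sup_le (Ideal.span_le.mpr (Set.singleton_subset_iff.mpr hcase.2)) hIn₂) hmem)
  · right
    obtain ⟨p, hpmax, hIp, hxp, hyp⟩ : ∃ p : Ideal R, p.IsMaximal ∧ I ≤ p ∧ x ∉ p ∧ y ∉ p := by
      rcases not_and_or.mp hcase with h | h
      · exact ⟨m₂, hm₂max, hIm₂, hxm₂, h⟩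
      · exact ⟨n₂, hn₂max, hIn₂, h, hyn₂⟩
    have hpm₁ : ¬ p ≤ m₁ := fun hle => hxp ((hpmax.eq_of_le hm₁.ne_top hle) ▸ hxm₁)
    have hpn₁ : ¬ p ≤ n₁ := fun hle => hyp ((hpmax.eq_of_le hn₁.ne_top hle) ▸ hyn₁)
    obtain ⟨a, hap, ham⟩ := SetLike.not_le_iff_exists.mp hpm₁
    obtain ⟨b, hbp, hbn⟩ := SetLike.not_le_iff_exists.mp hpn₁
    obtain ⟨z, hzp, hzm, hzn⟩ : ∃ z, z ∈ p ∧ z ∉ m₁ ∧ z ∉ n₁ := by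
      by_cases h1 : a ∈ n₁
      · by_cases h2 : b ∈ m₁
        · refine ⟨a + b, p.add_mem hap hbp, ?_, ?_⟩
          · intro h
            exact ham (by simpa using m₁.sub_mem h h2)
          · intro h
            exact hbn (by simpa using n₁.sub_mem h h1)
        · exact ⟨b, hbp, h2, hbn⟩
      · exact ⟨a, hap, ham, h1⟩
    have hzle : Ideal.span {z} ⊔ I ≤ p :=
      sup_le (Ideal.span_le.mpr (Set.singleton_subset_iff.mpr hzp)) hIp
    refine ⟨z, fun h => hzm (hIm₁ h),
      fun h => hpmax.ne_top (top_le_iff.mp (h ▸ hzle)),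
      fun h => hzm (Submodule.mem_sInf.mp h m₁ ⟨hm₁, hIm₁⟩),
      by rintro rfl; exact hzm hxm₁,
      by rintro rfl; exact hzn hyn₁,
      ⟨fun h => hxp (hzle h), fun h => hzm (hm₁le h)⟩,
      ⟨fun h => hzn (hn₁le h), fun h => hyp (hzle h)⟩⟩
end

section
/- Let R be a commutative ring with identity and I an ideal. Then the cozero-divisor graph Γ'(R/I) is a retract of Γ''_I(R): the map ρ(x) = x + I is a surjective graph homomorphism from Γ''_I(R) to Γ'(R/I), and choosing a representative x* for each coset gives a graph homomorphism φ with ρ ∘ φ the identity on Γ'(R/I). -/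
private lemma mem_span_quot {R : Type*} [CommRing R] (I : Ideal R) (x y : R) :
    Ideal.Quotient.mk I x ∈ Ideal.span {Ideal.Quotient.mk I y} ↔
      x ∈ Ideal.span {y} ⊔ I := by
  constructor
  · intro h
    rw [Ideal.mem_span_singleton] at h
    obtain ⟨c, hc⟩ := h
    obtain ⟨a, rfl⟩ := Ideal.Quotient.mk_surjective c
    rw [← map_mul, Ideal.Quotient.eq] at hc
    have : x = y * a + (x - y * a) := by ring
    rw [this]
    exact Submodule.add_mem_sup (Ideal.mem_span_singleton.mpr ⟨a, rfl⟩) hc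
  · intro h
    obtain ⟨a, ha, b, hb, rfl⟩ := Submodule.mem_sup.mp h
    rw [Ideal.mem_span_singleton] at ha
    obtain ⟨c, rfl⟩ := ha
    rw [Ideal.mem_span_singleton]
    refine ⟨Ideal.Quotient.mk I c, ?_⟩
    rw [map_add, Ideal.Quotient.eq_zero_iff_mem.mpr hb, add_zero, map_mul]

private lemma isUnit_quot {R : Type*} [CommRing R] (I : Ideal R) (x : R) :
    IsUnit (Ideal.Quotient.mk I x) ↔ Ideal.span {x} ⊔ I = ⊤ := by
  rw [← Ideal.span_singleton_eq_top, Ideal.eq_top_iff_one, Ideal.eq_top_iff_one]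
  have := mem_span_quot I 1 x
  rw [map_one] at this
  exact this

theorem stmt_9 {R : Type*} [CommRing R] (I : Ideal R) :
    ∃ (ρ : {x : R // x ∉ I ∧ Ideal.span {x} ⊔ I ≠ ⊤} →
        {y : R ⧸ I // y ≠ 0 ∧ ¬IsUnit y})
      (φ : {y : R ⧸ I // y ≠ 0 ∧ ¬IsUnit y} →
        {x : R // x ∉ I ∧ Ideal.span {x} ⊔ I ≠ ⊤}),
      (∀ x : {x : R // x ∉ I ∧ Ideal.span {x} ⊔ I ≠ ⊤},
        (ρ x).1 = Ideal.Quotient.mk I x.1) ∧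
      Function.Surjective ρ ∧
      (∀ x y : {x : R // x ∉ I ∧ Ideal.span {x} ⊔ I ≠ ⊤}, x.1 ≠ y.1 →
        x.1 ∉ Ideal.span {y.1} ⊔ I → y.1 ∉ Ideal.span {x.1} ⊔ I →
        ((ρ x).1 ≠ (ρ y).1 ∧ (ρ x).1 ∉ Ideal.span {(ρ y).1} ∧
          (ρ y).1 ∉ Ideal.span {(ρ x).1})) ∧
      (∀ u v : {y : R ⧸ I // y ≠ 0 ∧ ¬IsUnit y}, u.1 ≠ v.1 →
        u.1 ∉ Ideal.span {v.1} → v.1 ∉ Ideal.span {u.1} →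
        ((φ u).1 ≠ (φ v).1 ∧ (φ u).1 ∉ Ideal.span {(φ v).1} ⊔ I ∧
          (φ v).1 ∉ Ideal.span {(φ u).1} ⊔ I)) ∧
      (∀ u, ρ (φ u) = u) := by
  set π := Ideal.Quotient.mk I
  have hρ : ∀ x : {x : R // x ∉ I ∧ Ideal.span {x} ⊔ I ≠ ⊤},
      π x.1 ≠ 0 ∧ ¬IsUnit (π x.1) := by
    intro ⟨x, hx1, hx2⟩
    exact ⟨fun h => hx1 (Ideal.Quotient.eq_zero_iff_mem.mp h),
      fun h => hx2 ((isUnit_quot I x).mp h)⟩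
  refine ⟨fun x => ⟨π x.1, hρ x⟩, ?_⟩
  have hpre : ∀ u : {y : R ⧸ I // y ≠ 0 ∧ ¬IsUnit y},
      ∃ x : R, π x = u.1 ∧ x ∉ I ∧ Ideal.span {x} ⊔ I ≠ ⊤ := by
    intro ⟨u, hu1, hu2⟩
    obtain ⟨x, hx⟩ := Ideal.Quotient.mk_surjective u
    exact ⟨x, hx, fun h => hu1 (hx ▸ Ideal.Quotient.eq_zero_iff_mem.mpr h),
      fun h => hu2 (hx ▸ (isUnit_quot I x).mpr h)⟩
  choose f hf1 hf2 hf3 using hpre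
  refine ⟨fun u => ⟨f u, hf2 u, hf3 u⟩, fun x => rfl, ?_, ?_, ?_, ?_⟩
  · intro u
    exact ⟨⟨f u, hf2 u, hf3 u⟩, Subtype.ext (hf1 u)⟩
  · intro x y hne hxy hyx
    refine ⟨?_, fun h => hxy ((mem_span_quot I _ _).mp h),
      fun h => hyx ((mem_span_quot I _ _).mp h)⟩
    intro h
    apply hxy
    have : x.1 - y.1 ∈ I := Ideal.Quotient.eq.mp h
    have hx : x.1 = y.1 * 1 + (x.1 - y.1) := by ring
    rw [hx]
    exact Submodule.add_mem_sup (Ideal.mem_span_singleton.mpr ⟨1, rfl⟩) this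
  · intro u v hne huv hvu
    have e1 := hf1 u
    have e2 := hf1 v
    simp only at *
    refine ⟨fun h => hne (by rw [← e1, ← e2, h]), ?_, ?_⟩
    · intro h
      exact huv (by rw [← e1, ← e2]; exact (mem_span_quot I _ _).mpr h)
    · intro h
      exact hvu (by rw [← e1, ← e2]; exact (mem_span_quot I _ _).mpr h)
  · intro u
    exact Subtype.ext (hf1 u)
end

section
/- Let R be a commutative ring with identity, I an ideal, and a, b vertices of QΓ''_I(R) with a + I = a + √I and b + I = b + √I. If a is adjacent to b in QΓ''_I(R) (i.e., a ∉ bR + I and b ∉ aR + I), then a + √I ≠ b + √I in R/√I, and a + √I ∉ (b + √I)(R/√I) and b + √I ∉ (a + √I)(R/√I), so that a + √I and b + √I are adjacent in the cozero-divisor graph Γ'(R/√I). -/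
lemma key_sup_mem {R : Type*} [CommRing R] (J : Ideal R) (x y c : R)
    (h : x - y * c ∈ J) : x ∈ Ideal.span {y} ⊔ J := by
  have hx : x = y * c + (x - y * c) := by ring
  rw [hx]
  exact Submodule.add_mem_sup (Ideal.mem_span_singleton.mpr ⟨c, rfl⟩) h

theorem stmt_11 {R : Type*} [CommRing R] (I : Ideal R) (a b : R)
    (ha : a ∉ I.radical ∧ Ideal.span {a} ⊔ I ≠ ⊤ ∧
      Ideal.span {a} ⊔ I.radical = Ideal.span {a} ⊔ I)
    (hb : b ∉ I.radical ∧ Ideal.span {b} ⊔ I ≠ ⊤ ∧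
      Ideal.span {b} ⊔ I.radical = Ideal.span {b} ⊔ I)
    (hacoset : (a + ·) '' (I : Set R) = (a + ·) '' (I.radical : Set R))
    (hbcoset : (b + ·) '' (I : Set R) = (b + ·) '' (I.radical : Set R))
    (hab : a ≠ b)
    (hadj1 : a ∉ Ideal.span {b} ⊔ I) (hadj2 : b ∉ Ideal.span {a} ⊔ I) :
    Ideal.Quotient.mk I.radical a ≠ Ideal.Quotient.mk I.radical b ∧
    Ideal.Quotient.mk I.radical a ≠ 0 ∧ ¬IsUnit (Ideal.Quotient.mk I.radical a) ∧
    Ideal.Quotient.mk I.radical b ≠ 0 ∧ ¬IsUnit (Ideal.Quotient.mk I.radical b) ∧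
    Ideal.Quotient.mk I.radical a ∉ Ideal.span {Ideal.Quotient.mk I.radical b} ∧
    Ideal.Quotient.mk I.radical b ∉ Ideal.span {Ideal.Quotient.mk I.radical a} := by
  obtain ⟨ha1, ha2, ha3⟩ := ha
  obtain ⟨hb1, hb2, hb3⟩ := hb
  have notunit : ∀ x : R, Ideal.span {x} ⊔ I.radical ≠ ⊤ →
      ¬IsUnit (Ideal.Quotient.mk I.radical x) := by
    intro x hx hu
    obtain ⟨v, hv⟩ := hu.exists_right_inv
    obtain ⟨c, rfl⟩ := Ideal.Quotient.mk_surjective v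
    rw [← map_mul, ← map_one (Ideal.Quotient.mk I.radical)] at hv
    have h0 : x * c - 1 ∈ I.radical := Ideal.Quotient.eq.mp hv
    have h1 : (1 : R) - x * c ∈ I.radical := by
      have := neg_mem h0; simpa using this
    exact hx ((Ideal.eq_top_iff_one _).mpr (key_sup_mem _ 1 x c h1))
  have notspan : ∀ x y : R, x ∉ Ideal.span {y} ⊔ I →
      Ideal.span {y} ⊔ I.radical = Ideal.span {y} ⊔ I →
      Ideal.Quotient.mk I.radical x ∉ Ideal.span {Ideal.Quotient.mk I.radical y} := by
    intro x y hxy heq hmem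
    rw [Ideal.mem_span_singleton] at hmem
    obtain ⟨c, hc⟩ := hmem
    obtain ⟨c', rfl⟩ := Ideal.Quotient.mk_surjective c
    rw [← map_mul] at hc
    have h0 : x - y * c' ∈ I.radical := Ideal.Quotient.eq.mp hc
    exact hxy (heq ▸ key_sup_mem _ x y c' h0)
  refine ⟨?_, ?_, ?_, ?_, ?_, ?_, ?_⟩
  · intro h
    have h0 : a - b ∈ I.radical := Ideal.Quotient.eq.mp h
    have h1 : a - b * 1 ∈ I.radical := by simpa using h0
    exact hadj1 (hb3 ▸ key_sup_mem _ a b 1 h1)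
  · rw [Ne, Ideal.Quotient.eq_zero_iff_mem]; exact ha1
  · exact notunit a (ha3 ▸ ha2)
  · rw [Ne, Ideal.Quotient.eq_zero_iff_mem]; exact hb1
  · exact notunit b (hb3 ▸ hb2)
  · exact notspan a b hadj1 hb3
  · exact notspan b a hadj2 ha3
end

section
/- Let R be a commutative ring with identity, I an ideal, and T_I = {x ∈ R : Rx + I ≠ Rx + √I}. If I is a sum-radical ideal (i.e., √I = I + Rx₀ for some x₀ ∈ √I), then no maximal ideal m containing I satisfies m ⊆ T_I. -/
theorem stmt_13 {R : Type*} [CommRing R] (I : Ideal R)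
    (hsum : ∃ x₀ ∈ I.radical, I.radical = I ⊔ Ideal.span {x₀})
    (T : Set R)
    (hT : T = {x : R | Ideal.span {x} ⊔ I ≠ Ideal.span {x} ⊔ I.radical}) :
    ∀ m : Ideal R, m.IsMaximal → I ≤ m → ¬((m : Set R) ⊆ T) := by
  intro m hm hIm hsub
  obtain ⟨x₀, hx₀rad, hrad⟩ := hsum
  have key : ∀ x ∈ m, x₀ ∈ Ideal.span {x} ⊔ I → False := by
    intro x hxm hx₀
    have hxT : x ∈ T := hsub hxm
    rw [hT] at hxT
    apply hxT
    refine le_antisymm (sup_le_sup_left Ideal.le_radical _) ?_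
    refine sup_le le_sup_left ?_
    rw [hrad]
    exact sup_le le_sup_right
      ((Ideal.span_le).mpr (by simpa using hx₀))
  by_cases hx₀m : x₀ ∈ m
  · exact key x₀ hx₀m (Ideal.mem_sup_left (Ideal.subset_span rfl))
  · have hlt : m < m ⊔ Ideal.span {x₀} :=
      lt_of_le_of_ne le_sup_left (fun h => hx₀m (by
        have : Ideal.span {x₀} ≤ m := by rw [h]; exact le_sup_right
        exact this (Ideal.subset_span rfl)))
    have htop : m ⊔ Ideal.span {x₀} = ⊤ := hm.out.2 _ hlt
    have h1 : (1 : R) ∈ m ⊔ Ideal.span {x₀} := by rw [htop]; exact Submodule.mem_top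
    obtain ⟨y, hym, c, hc, hyc⟩ := Submodule.mem_sup.mp h1
    obtain ⟨r, hr⟩ := Ideal.mem_span_singleton'.mp hc
    obtain ⟨n, hn⟩ := hx₀rad
    have hI : x₀ ^ (n + 1) ∈ I := by
      rw [pow_succ]; exact I.mul_mem_right _ hn
    have hy : y = 1 - r * x₀ := by rw [← hyc, ← hr]; ring
    have hdvd : y ∣ x₀ - r ^ n * x₀ ^ (n + 1) := by
      have h2 : (1 - r * x₀) ∣ 1 ^ n - (r * x₀) ^ n := sub_dvd_pow_sub_pow 1 (r * x₀) n
      rw [hy]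
      obtain ⟨s, hs⟩ := h2
      exact ⟨x₀ * s, by linear_combination x₀ * hs⟩
    refine key y hym ?_
    have hmem1 : x₀ - r ^ n * x₀ ^ (n + 1) ∈ Ideal.span {y} :=
      Ideal.mem_span_singleton.mpr hdvd
    have hmem2 : r ^ n * x₀ ^ (n + 1) ∈ I := I.mul_mem_left _ hI
    have := Submodule.add_mem _ (Ideal.mem_sup_left hmem1) (Ideal.mem_sup_right hmem2)
    simpa using this
end

section
/- Let R be a commutative ring with identity, I a sum-radical ideal, and suppose exactly two maximal ideals m₁, m₂ contain I. Then the induced subgraph of QΓ''_I(R) on vertices outside J_I(R) = m₁ ∩ m₂ is a complete bipartite graph with parts m_i \ (J_I(R) ∪ T_I), i = 1, 2, if and only if for every i and all x, y ∈ m_i \ (J_I(R) ∪ T_I), the ideals xR + I and yR + I are comparable (xR + I ⊆ yR + I or yR + I ⊆ xR + I). -/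
theorem stmt_18 {R : Type*} [CommRing R] (I : Ideal R)
    (hsum : ∃ x₀ ∈ I.radical, I.radical = I ⊔ Ideal.span {x₀})
    (m₁ m₂ : Ideal R) (hm₁ : m₁.IsMaximal) (hm₂ : m₂.IsMaximal)
    (hIm₁ : I ≤ m₁) (hIm₂ : I ≤ m₂) (hne : m₁ ≠ m₂)
    (honly : ∀ m : Ideal R, m.IsMaximal → I ≤ m → m = m₁ ∨ m = m₂)
    (J : Ideal R) (hJ : J = m₁ ⊓ m₂)
    (T : Set R) (hT : T = {x : R | Ideal.span {x} ⊔ I ≠ Ideal.span {x} ⊔ I.radical})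
    (A₁ A₂ : Set R)
    (hA₁ : A₁ = (m₁ : Set R) \ ((J : Set R) ∪ T))
    (hA₂ : A₂ = (m₂ : Set R) \ ((J : Set R) ∪ T)) :
    ((∀ x ∈ A₁, ∀ y ∈ A₁, x ≠ y →
        ¬(x ∉ Ideal.span {y} ⊔ I ∧ y ∉ Ideal.span {x} ⊔ I)) ∧
     (∀ x ∈ A₂, ∀ y ∈ A₂, x ≠ y →
        ¬(x ∉ Ideal.span {y} ⊔ I ∧ y ∉ Ideal.span {x} ⊔ I)) ∧
     (∀ x ∈ A₁, ∀ y ∈ A₂,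
        x ≠ y ∧ x ∉ Ideal.span {y} ⊔ I ∧ y ∉ Ideal.span {x} ⊔ I)) ↔
    ((∀ x ∈ A₁, ∀ y ∈ A₁,
        Ideal.span {x} ⊔ I ≤ Ideal.span {y} ⊔ I ∨
        Ideal.span {y} ⊔ I ≤ Ideal.span {x} ⊔ I) ∧
     (∀ x ∈ A₂, ∀ y ∈ A₂,
        Ideal.span {x} ⊔ I ≤ Ideal.span {y} ⊔ I ∨
        Ideal.span {y} ⊔ I ≤ Ideal.span {x} ⊔ I)) := by
  have key : ∀ (x y : R), x ∈ Ideal.span {y} ⊔ I →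
      Ideal.span {x} ⊔ I ≤ Ideal.span {y} ⊔ I := fun x y hx =>
    sup_le ((Ideal.span_singleton_le_iff_mem _).mpr hx) le_sup_right
  have self : ∀ x : R, x ∈ Ideal.span {x} ⊔ I := fun x =>
    Ideal.mem_sup_left (Ideal.mem_span_singleton_self x)
  constructor
  · rintro ⟨h1, h2, _⟩
    constructor
    · intro x hx y hy
      by_cases hxy : x = y
      · subst hxy; exact Or.inl le_rfl
      · rcases not_and_or.mp (h1 x hx y hy hxy) with h | h
        · exact Or.inl (key x y (not_not.mp h))
        · exact Or.inr (key y x (not_not.mp h))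
    · intro x hx y hy
      by_cases hxy : x = y
      · subst hxy; exact Or.inl le_rfl
      · rcases not_and_or.mp (h2 x hx y hy hxy) with h | h
        · exact Or.inl (key x y (not_not.mp h))
        · exact Or.inr (key y x (not_not.mp h))
  · rintro ⟨h1, h2⟩
    refine ⟨?_, ?_, ?_⟩
    · intro x hx y hy hxy
      rintro ⟨hxny, hynx⟩
      rcases h1 x hx y hy with h | h
      · exact hxny (h (self x))
      · exact hynx (h (self y))
    · intro x hx y hy hxy
      rintro ⟨hxny, hynx⟩
      rcases h2 x hx y hy with h | h
      · exact hxny (h (self x))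
      · exact hynx (h (self y))
    · intro x hx y hy
      subst hA₁ hA₂ hJ
      obtain ⟨hxm1, hxn⟩ := hx
      obtain ⟨hym2, hyn⟩ := hy
      have hxJ : x ∉ (↑(m₁ ⊓ m₂) : Set R) := fun h => hxn (Or.inl h)
      have hyJ : y ∉ (↑(m₁ ⊓ m₂) : Set R) := fun h => hyn (Or.inl h)
      have hxm2 : x ∉ m₂ := fun h => hxJ (Ideal.mem_inf.mpr ⟨hxm1, h⟩)
      have hym1 : y ∉ m₁ := fun h => hyJ (Ideal.mem_inf.mpr ⟨h, hym2⟩)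
      refine ⟨fun h => hxm2 (h ▸ hym2), ?_, ?_⟩
      · intro h
        exact hxm2 (sup_le ((Ideal.span_singleton_le_iff_mem _).mpr hym2) hIm₂ h)
      · intro h
        exact hym1 (sup_le ((Ideal.span_singleton_le_iff_mem _).mpr hxm1) hIm₁ h)
end
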